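/- Let X be a G-valued random variable and S a subset of G with P(X in S) >= 1/2. Then for any G-valued random variable Y with finite entropy, log|S| >= H(Y) - 4 d[X;Y] - 2 log 2. -/

import Mathlib

open scoped BigOperators Pointwise
noncomputable section

/-- A finitely supported probability mass function. -/
def IsPMF {α : Type*} (p : α → ℝ) : Prop :=
  (∀ x, 0 ≤ p x) ∧ (Function.support p).Finite ∧ ∑ᶠ x, p x = 1

/-- Shannon entropy of a pmf. -/
def ent {α : Type*} (p : α → ℝ) : ℝ := ∑ᶠ x, -(p x * Real.log (p x))

/-- Convolution of pmfs: the distribution of the sum of independent random variables. -/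
def conv {G : Type*} [AddCommGroup G] (p q : G → ℝ) : G → ℝ :=
  fun z => ∑ᶠ x, p x * q (z - x)

/-- Distribution of the negation. -/
def negp {G : Type*} [AddCommGroup G] (p : G → ℝ) : G → ℝ := fun x => p (-x)

/-- Entropic Ruzsa distance between (the distributions of) two random variables. -/
def rdist {G : Type*} [AddCommGroup G] (p q : G → ℝ) : ℝ :=
  ent (conv p (negp q)) - ent p / 2 - ent q / 2

/-- Distribution of the sum of `n` iid copies. -/
def iterConv {G : Type*} [AddCommGroup G] (p : G → ℝ) : ℕ → G → ℝ
  | 0 => fun x => Set.indicator ({0} : Set G) (fun _ => (1 : ℝ)) x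
  | n + 1 => conv (iterConv p n) p


/-! Let `r` be the law of `X` conditioned on `X ∈ S` and `P = P(X ∈ S)`. The entropy of a
difference of independent variables dominates both entropies, so `H(Y) ≤ H(r) + 2 d[r;Y]`,
and `H(r) ≤ log |S|`. Writing the law of `X` as the mixture `P • r + (1 - P) • r'`, with `r'`
the law conditioned on `X ∉ S`, concavity of entropy on the law of `X - Y` together with
`H(X) ≤ P H(r) + (1 - P) H(r') + h(P)` gives `P d[r;Y] ≤ d[X;Y] + log 2 / 2`; as `P ≥ 1/2`,
`d[r;Y] ≤ 2 d[X;Y] + log 2`. -/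

open Real Function

section Entropy

variable {α : Type*}

lemma ent_eq_finsum_negMulLog (f : α → ℝ) : ent f = ∑ᶠ x, negMulLog (f x) := by
  simp [ent, negMulLog]

lemma ent_eq_sum_negMulLog {f : α → ℝ} {T : Finset α} (h : support f ⊆ T) :
    ent f = ∑ x ∈ T, negMulLog (f x) := by
  rw [ent_eq_finsum_negMulLog]
  exact finsum_eq_sum_of_support_subset _ ((support_comp_subset negMulLog_zero f).trans h)

lemma ent_comp_equiv {β : Type*} (f : β → ℝ) (e : α ≃ β) : ent (f ∘ e) = ent f :=
  finsum_comp_equiv e (f := fun x => -(f x * log (f x)))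

lemma IsPMF.sum_eq_one {p : α → ℝ} (hp : IsPMF p) {T : Finset α} (h : support p ⊆ T) :
    ∑ x ∈ T, p x = 1 := by
  rw [← finsum_eq_sum_of_support_subset _ h, hp.2.2]

lemma ent_le_log_card {r : α → ℝ} (hr : IsPMF r) {T : Finset α} (h : support r ⊆ T) :
    ent r ≤ log T.card := by
  classical
  set T' := T.filter (r · ≠ 0)
  have hT' : support r ⊆ T' := fun x hx => Finset.mem_filter.2 ⟨h hx, hx⟩
  have hpos : ∀ x ∈ T', 0 < r x := fun x hx =>
    (hr.1 x).lt_of_ne' (Finset.mem_filter.1 hx).2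
  -- Jensen for `log` with weights `r x` at the points `(r x)⁻¹`
  have jensen := strictConcaveOn_log_Ioi.concaveOn.le_map_sum (t := T') (w := r)
    (p := fun x => (r x)⁻¹) (fun x _ => hr.1 x) (hr.sum_eq_one hT')
    (fun x hx => inv_pos.2 (hpos x hx))
  have hcard : T'.card = ∑ x ∈ T', r x • (r x)⁻¹ := by
    simp [Finset.sum_congr rfl fun x hx => mul_inv_cancel₀ (hpos x hx).ne']
  have hT'_pos : 0 < T'.card := Finset.card_pos.2 (Finset.nonempty_of_sum_ne_zero
    (by rw [hr.sum_eq_one hT']; exact one_ne_zero))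
  calc ent r = ∑ x ∈ T', r x • log (r x)⁻¹ := by
        rw [ent_eq_sum_negMulLog hT']; simp [negMulLog, log_inv]
    _ ≤ log T'.card := hcard ▸ jensen
    _ ≤ log T.card := log_le_log (by exact_mod_cast hT'_pos)
        (by exact_mod_cast Finset.card_filter_le _ _)

end Entropy

section Mixture

variable {α : Type*}

def mix (t : ℝ) (r s : α → ℝ) : α → ℝ := fun x => t * r x + (1 - t) * s x

lemma support_mix_subset (t : ℝ) (r s : α → ℝ) :
    support (mix t r s) ⊆ support r ∪ support s := by
  intro x hx
  by_contra! h
  simp only [Set.mem_union, mem_support, not_or, not_not] at h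
  exact hx (by simp [mix, h.1, h.2])

lemma negMulLog_add_le {a b : ℝ} (ha : 0 ≤ a) (hb : 0 ≤ b) :
    negMulLog (a + b) ≤ negMulLog a + negMulLog b := by
  have mul_log_le : ∀ {a b : ℝ}, 0 ≤ a → 0 ≤ b → a * log a ≤ a * log (a + b) := by
    intro a b ha hb
    rcases ha.eq_or_lt with rfl | ha
    · simp
    · exact mul_le_mul_of_nonneg_left (log_le_log ha (by linarith)) ha.le
  have := mul_log_le ha hb
  have := mul_log_le hb ha
  simp only [negMulLog, add_comm b a] at *
  linarith

lemma ent_mix_le {r s : α → ℝ} (hr : IsPMF r) (hs : IsPMF s) {t : ℝ} (ht₀ : 0 ≤ t)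
    (ht₁ : t ≤ 1) : ent (mix t r s) ≤ t * ent r + (1 - t) * ent s + binEntropy t := by
  classical
  set T := (hr.2.1.union hs.2.1).toFinset
  have hrT : support r ⊆ T := by simp [T]
  have hsT : support s ⊆ T := by simp [T]
  rw [ent_eq_sum_negMulLog (T := T) ((support_mix_subset t r s).trans (by simp [T])),
    ent_eq_sum_negMulLog hrT, ent_eq_sum_negMulLog hsT,
    binEntropy_eq_negMulLog_add_negMulLog_one_sub]
  calc ∑ x ∈ T, negMulLog (mix t r s x)
      ≤ ∑ x ∈ T, (negMulLog (t * r x) + negMulLog ((1 - t) * s x)) :=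
        Finset.sum_le_sum fun x _ =>
          negMulLog_add_le (mul_nonneg ht₀ (hr.1 x)) (mul_nonneg (sub_nonneg.2 ht₁) (hs.1 x))
    _ = _ := by
        simp only [negMulLog_mul, Finset.sum_add_distrib, ← Finset.sum_mul, ← Finset.mul_sum,
          hr.sum_eq_one hrT, hs.sum_eq_one hsT]
        ring

lemma le_ent_mix {f g : α → ℝ} (hf₀ : ∀ x, 0 ≤ f x) (hg₀ : ∀ x, 0 ≤ g x)
    (hf : (support f).Finite) (hg : (support g).Finite) {t : ℝ} (ht₀ : 0 ≤ t) (ht₁ : t ≤ 1) :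
    t * ent f + (1 - t) * ent g ≤ ent (mix t f g) := by
  classical
  set T := (hf.union hg).toFinset
  rw [ent_eq_sum_negMulLog (T := T) ((support_mix_subset t f g).trans (by simp [T])),
    ent_eq_sum_negMulLog (show support f ⊆ T by simp [T]),
    ent_eq_sum_negMulLog (show support g ⊆ T by simp [T]),
    Finset.mul_sum, Finset.mul_sum, ← Finset.sum_add_distrib]
  exact Finset.sum_le_sum fun x _ =>
    concaveOn_negMulLog.2 (hf₀ x) (hg₀ x) ht₀ (sub_nonneg.2 ht₁) (by ring)

def condPMF (p : α → ℝ) (S : Set α) : α → ℝ := fun x => S.indicator p x / ∑ᶠ y ∈ S, p y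

lemma support_condPMF_subset (p : α → ℝ) (S : Set α) :
    support (condPMF p S) ⊆ S ∩ support p := by
  unfold condPMF
  rw [support_div, Set.support_indicator]
  exact Set.inter_subset_left

lemma isPMF_condPMF {p : α → ℝ} (hp : IsPMF p) {S : Set α} (hS : 0 < ∑ᶠ x ∈ S, p x) :
    IsPMF (condPMF p S) := by
  refine ⟨fun x => div_nonneg (Set.indicator_nonneg (fun y _ => hp.1 y) x) hS.le,
    hp.2.1.subset ((support_condPMF_subset p S).trans Set.inter_subset_right), ?_⟩
  simp only [condPMF, div_eq_mul_inv, ← finsum_mul, ← finsum_mem_def]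
  exact mul_inv_cancel₀ hS.ne'

lemma IsPMF.finsum_mem_compl {p : α → ℝ} (hp : IsPMF p) (S : Set α) :
    ∑ᶠ x ∈ Sᶜ, p x = 1 - ∑ᶠ x ∈ S, p x := by
  have := finsum_mem_add_sdiff' (Set.subset_univ S) (by simpa using hp.2.1)
  rw [finsum_mem_univ, hp.2.2, ← Set.compl_eq_univ_sdiff] at this
  linarith

lemma IsPMF.eq_mix_condPMF {p : α → ℝ} (hp : IsPMF p) (S : Set α) :
    p = mix (∑ᶠ x ∈ S, p x) (condPMF p S) (condPMF p Sᶜ) := by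
  funext x
  have hind₀ : ∀ T : Set α, ∀ y, 0 ≤ T.indicator p y := fun T =>
    Set.indicator_nonneg fun y _ => hp.1 y
  have hcancel : ∀ T : Set α,
      (∑ᶠ y ∈ T, p y) * (T.indicator p x / ∑ᶠ y ∈ T, p y) = T.indicator p x := by
    intro T
    refine mul_div_cancel_of_imp' fun h0 => le_antisymm ?_ (hind₀ T x)
    rw [← h0, finsum_mem_def]
    exact single_le_finsum x
      (hp.2.1.subset (Set.support_indicator.trans_subset Set.inter_subset_right)) (hind₀ T)
  rw [mix, ← hp.finsum_mem_compl S, condPMF, condPMF, hcancel, hcancel,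
    Set.indicator_self_add_compl_apply]

end Mixture

section Convolution

variable {G : Type*} [AddCommGroup G]

lemma conv_comm (f g : G → ℝ) : conv f g = conv g f := by
  funext z
  rw [conv, conv, ← finsum_comp_equiv (Equiv.subLeft z)]
  simp [mul_comm]

lemma conv_eq_sum {w : G → ℝ} {W : Finset G} (h : support w ⊆ W) (f : G → ℝ) (z : G) :
    conv w f z = ∑ x ∈ W, w x * f (z - x) :=
  finsum_eq_sum_of_support_subset _ ((support_mul_subset_left _ _).trans h)

lemma support_conv_subset (f g : G → ℝ) : support (conv f g) ⊆ support f + support g := by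
  intro z hz
  obtain ⟨x, hx⟩ : ∃ x, f x * g (z - x) ≠ 0 := by
    by_contra! h
    exact hz (finsum_eq_zero_of_forall_eq_zero h)
  exact ⟨x, left_ne_zero_of_mul hx, z - x, right_ne_zero_of_mul hx, add_sub_cancel x z⟩

lemma conv_nonneg {f g : G → ℝ} (hf : ∀ x, 0 ≤ f x) (hg : ∀ x, 0 ≤ g x) (z : G) :
    0 ≤ conv f g z :=
  finsum_nonneg fun x => mul_nonneg (hf x) (hg (z - x))

lemma conv_mix {r s : G → ℝ} (hr : (support r).Finite) (hs : (support s).Finite) (t : ℝ)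
    (g : G → ℝ) : conv (mix t r s) g = mix t (conv r g) (conv s g) := by
  funext z
  simp only [conv, mix, mul_finsum]
  rw [← finsum_add_distrib]
  · exact finsum_congr fun x => by ring
  · exact hr.subset ((support_mul_subset_right _ _).trans (support_mul_subset_left _ _))
  · exact hs.subset ((support_mul_subset_right _ _).trans (support_mul_subset_left _ _))

lemma isPMF_negp {q : G → ℝ} (hq : IsPMF q) : IsPMF (negp q) :=
  ⟨fun x => hq.1 (-x), hq.2.1.preimage neg_injective.injOn,
    (finsum_comp_equiv (Equiv.neg G)).trans hq.2.2⟩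

lemma ent_negp (q : G → ℝ) : ent (negp q) = ent q :=
  ent_comp_equiv q (Equiv.neg G)

/-- Jensen's inequality for the concave `negMulLog`, averaged over the translates of `f`. -/
lemma ent_le_ent_conv {w f : G → ℝ} (hw : IsPMF w) (hf₀ : ∀ x, 0 ≤ f x)
    (hf : (support f).Finite) : ent f ≤ ent (conv w f) := by
  classical
  set W := hw.2.1.toFinset
  set T := W + hf.toFinset
  have hwW : support w ⊆ W := by simp [W]
  have hconv : support (conv w f) ⊆ T := by
    rw [Finset.coe_add]
    exact (support_conv_subset w f).trans (Set.add_subset_add hwW (by simp))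
  have htranslate : ∀ x ∈ W, ∑ z ∈ T, negMulLog (f (z - x)) = ent f := by
    intro x hx
    rw [← ent_comp_equiv f (Equiv.subRight x), ent_eq_sum_negMulLog]
    · rfl
    · intro z hz
      rw [Finset.coe_add]
      exact ⟨x, hx, z - x, by simpa using hz, add_sub_cancel x z⟩
  calc ent f = ∑ x ∈ W, w x * ent f := by rw [← Finset.sum_mul, hw.sum_eq_one hwW, one_mul]
    _ = ∑ z ∈ T, ∑ x ∈ W, w x * negMulLog (f (z - x)) := by
        rw [Finset.sum_comm]
        exact Finset.sum_congr rfl fun x hx => by rw [← Finset.mul_sum, htranslate x hx]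
    _ ≤ ∑ z ∈ T, negMulLog (conv w f z) := Finset.sum_le_sum fun z _ => by
        rw [conv_eq_sum hwW]
        exact concaveOn_negMulLog.le_map_sum (fun x _ => hw.1 x) (hw.sum_eq_one hwW)
          fun x _ => hf₀ (z - x)
    _ = ent (conv w f) := (ent_eq_sum_negMulLog hconv).symm

end Convolution

section RuzsaDistance

variable {G : Type*} [AddCommGroup G] {p q : G → ℝ}

lemma ent_le_ent_conv_negp_left (hp : IsPMF p) (hq : IsPMF q) :
    ent p ≤ ent (conv p (negp q)) :=
  conv_comm p (negp q) ▸ ent_le_ent_conv (isPMF_negp hq) hp.1 hp.2.1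

lemma ent_le_ent_conv_negp_right (hp : IsPMF p) (hq : IsPMF q) :
    ent q ≤ ent (conv p (negp q)) :=
  ent_negp q ▸ ent_le_ent_conv hp (isPMF_negp hq).1 (isPMF_negp hq).2.1

lemma rdist_nonneg (hp : IsPMF p) (hq : IsPMF q) : 0 ≤ rdist p q := by
  have := ent_le_ent_conv_negp_left hp hq
  have := ent_le_ent_conv_negp_right hp hq
  rw [rdist]
  linarith

lemma ent_le_ent_add_two_mul_rdist (hp : IsPMF p) (hq : IsPMF q) :
    ent q ≤ ent p + 2 * rdist p q := by
  have := ent_le_ent_conv_negp_right hp hq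
  rw [rdist]
  linarith

lemma rdist_mix {r s : G → ℝ} (hr : IsPMF r) (hs : IsPMF s) (hq : IsPMF q) {t : ℝ}
    (ht₀ : 0 ≤ t) (ht₁ : t ≤ 1) :
    t * rdist r q + (1 - t) * rdist s q ≤ rdist (mix t r s) q + binEntropy t / 2 := by
  have hnq := isPMF_negp hq
  have hconv := le_ent_mix (conv_nonneg hr.1 hnq.1) (conv_nonneg hs.1 hnq.1)
    ((hr.2.1.add hnq.2.1).subset (support_conv_subset _ _))
    ((hs.2.1.add hnq.2.1).subset (support_conv_subset _ _)) ht₀ ht₁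
  have hent := ent_mix_le hr hs ht₀ ht₁
  rw [← conv_mix hr.2.1 hs.2.1] at hconv
  simp only [rdist]
  linarith

lemma rdist_condPMF_le (hp : IsPMF p) (hq : IsPMF q) {S : Set G}
    (hS : 0 < ∑ᶠ x ∈ S, p x) :
    (∑ᶠ x ∈ S, p x) * rdist (condPMF p S) q ≤ rdist p q + log 2 / 2 := by
  have hdecomp := hp.eq_mix_condPMF S
  have hcompl := hp.finsum_mem_compl S
  have hle : ∑ᶠ x ∈ S, p x ≤ 1 := by
    have : 0 ≤ ∑ᶠ x ∈ Sᶜ, p x := finsum_nonneg fun x => finsum_nonneg fun _ => hp.1 x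
    linarith
  rcases hle.lt_or_eq with hlt | heq
  · have hSc : 0 < ∑ᶠ x ∈ Sᶜ, p x := by linarith
    have hmix := rdist_mix (isPMF_condPMF hp hS) (isPMF_condPMF hp hSc) hq hS.le hlt.le
    rw [← hdecomp] at hmix
    have := mul_nonneg (sub_nonneg.2 hlt.le) (rdist_nonneg (isPMF_condPMF hp hSc) hq)
    linarith [binEntropy_le_log_two (p := ∑ᶠ x ∈ S, p x)]
  · have hpS : p = condPMF p S := by
      funext x
      simpa [mix, heq] using congrFun hdecomp x
    have : rdist (condPMF p S) q = rdist p q := by rw [← hpS]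
    rw [heq, one_mul, this]
    linarith [log_nonneg one_le_two]

end RuzsaDistance

/-- if `P(X ∈ S) ≥ 1/2`, then for any `Y`,
`log |S| ≥ H(Y) - 4 d[X;Y] - 2 log 2`. -/
theorem log_card_ge_of_prob_half {G : Type*} [AddCommGroup G] (p q : G → ℝ)
    (hp : IsPMF p) (hq : IsPMF q) (S : Set G) (hS : S.Finite)
    (hprob : (1 : ℝ) / 2 ≤ ∑ᶠ x ∈ S, p x) :
    ent q - 4 * rdist p q - 2 * Real.log 2 ≤ Real.log hS.toFinset.card := by
  have hpos : 0 < ∑ᶠ x ∈ S, p x := by linarith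
  have hr := isPMF_condPMF hp hpos
  have hq_le := ent_le_ent_add_two_mul_rdist hr hq
  have hr_le : ent (condPMF p S) ≤ log hS.toFinset.card :=
    ent_le_log_card hr ((support_condPMF_subset p S).trans (by simp))
  have hcond := rdist_condPMF_le hp hq hpos
  have hhalf := mul_le_mul_of_nonneg_right hprob (rdist_nonneg hr hq)
  linarith
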